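/- arXiv:2410.14959 — 3 statements merged into one kernel-verified Lean document; each statement's English description precedes it below -/
import Mathlib

section
/- Let L and K be integers with 0 < K < L, let M be a nonzero L×L complex matrix, and suppose there are: column vectors U_1,…,U_K ∈ ℂ^L that are linearly independent and form the L×K matrix U; column vectors V_1,…,V_K ∈ ℂ^K that are linearly independent and form the K×K matrix V; and column vectors T_1,…,T_{L−K} ∈ ℂ^L forming the L×(L−K) matrix T, such that M = [U·Vᵀ | T] (the first K columns of M are the columns of U·Vᵀ and the remaining L−K columns are T_1,…,T_{L−K}). Then for every j with K < j ≤ L, the j-th row of the matrix adj(M)·U is the zero vector; equivalently, for all 1 ≤ k ≤ K < j ≤ L, the j-th entry of the column vector adj(M)·U_k is zero. -/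
/-- If `M = [U·Vᵀ | T]` where the columns of `U` and of `V` are linearly
independent, then for every row index `j` beyond the first `K` rows,
the `j`-th row of `adj(M)·U` vanishes. -/
theorem adjugate_mul_row_zero (L K : ℕ) (hK : 0 < K) (hKL : K < L)
    (M : Matrix (Fin L) (Fin L) ℂ) (hM : M ≠ 0)
    (U : Matrix (Fin L) (Fin K) ℂ)
    (hU : LinearIndependent ℂ U.transpose)
    (V : Matrix (Fin K) (Fin K) ℂ)
    (hV : LinearIndependent ℂ V.transpose)
    (T : Matrix (Fin L) (Fin (L - K)) ℂ)
    (hfirst : ∀ (i : Fin L) (k : Fin K),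
      M i ⟨(k : ℕ), k.2.trans hKL⟩ = (U * V.transpose) i k)
    (hlast : ∀ (i : Fin L) (t : Fin (L - K)),
      M i ⟨K + (t : ℕ), by omega⟩ = T i t) :
    ∀ (j : Fin L), K ≤ (j : ℕ) → ∀ (k : Fin K), (M.adjugate * U) j k = 0 := by
  intro j hj k
  set B := V.transpose with hB
  have hBunit : IsUnit B := Matrix.linearIndependent_rows_iff_isUnit.1 hV
  have hzero : ∀ c : Fin K, ((M.adjugate * U) * B) j c = 0 := by
    intro c
    have h1 : ((M.adjugate * U) * B) j c = (M.adjugate * M) j ⟨(c : ℕ), c.2.trans hKL⟩ := by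
      rw [Matrix.mul_assoc]
      simp only [Matrix.mul_apply]
      exact Finset.sum_congr rfl fun l _ => by rw [hfirst l c, Matrix.mul_apply]
    rw [h1, Matrix.adjugate_mul]
    have hne : j ≠ ⟨(c : ℕ), c.2.trans hKL⟩ := by
      intro h
      have : (j : ℕ) = (c : ℕ) := congrArg Fin.val h
      omega
    simp [Matrix.one_apply_ne hne]
  have hBinv : B * B⁻¹ = 1 := Matrix.mul_nonsing_inv B ((Matrix.isUnit_iff_isUnit_det B).1 hBunit)
  have heq : (M.adjugate * U) j k = ((M.adjugate * U) * B * B⁻¹) j k := by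
    rw [Matrix.mul_assoc, hBinv, Matrix.mul_one]
  rw [heq]
  simp [Matrix.mul_apply, hzero]
end

section
/- Let n ≥ 2, set m = n−1, let L ≥ 1, and let R = ℂ[ε₁,…,ε_m]. Let B be an L×L matrix over R all of whose entries have total degree at most 2, and write B = B⁰ + B¹ + B², where for j = 0, 1, 2 the matrix B^{j} consists of the degree-j homogeneous components of the entries of B. Suppose there exist column vectors E₁,…,E_m ∈ R^L whose entries are homogeneous polynomials of degree 1, such that: (i) every column of B¹ is a ℂ-linear combination of E₁,…,E_m, and (ii) setting e := Σ_{k=1}^m ε_k·E_k, every column of B² is a complex scalar multiple of e. Then the total degree of det(B) is at most n. -/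
open MvPolynomial

private lemma alt_zero_of_smul_smul {ι R M N : Type*} [DecidableEq ι] [CommSemiring R]
    [AddCommMonoid M] [Module R M] [AddCommMonoid N] [Module R N]
    (f : M [⋀^ι]→ₗ[R] N) (v : ι → M) {k₁ k₂ : ι} (hk : k₁ ≠ k₂) {a b : R} {w : M}
    (h1 : v k₁ = a • w) (h2 : v k₂ = b • w) : f v = 0 := by
  have e1 : f v = b • f (Function.update v k₂ w) := by
    conv_lhs => rw [← Function.update_eq_self k₂ v, h2]
    exact f.map_update_smul v k₂ b w
  have h1' : Function.update v k₂ w k₁ = a • w := by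
    rw [Function.update_of_ne hk, h1]
  have e2 : f (Function.update v k₂ w)
      = a • f (Function.update (Function.update v k₂ w) k₁ w) := by
    conv_lhs => rw [← Function.update_eq_self k₁ (Function.update v k₂ w), h1']
    exact f.map_update_smul _ k₁ a w
  have e3 : f (Function.update (Function.update v k₂ w) k₁ w) = 0 := by
    refine f.map_eq_zero_of_eq _ (i := k₁) (j := k₂) ?_ hk
    simp [Function.update_of_ne hk.symm]
  rw [e1, e2, e3, smul_zero, smul_zero]

private lemma alt_zero_of_card {ι α R M N : Type*} [Fintype ι] [DecidableEq ι]
    [Fintype α] [Nonempty α] [DecidableEq α] [CommSemiring R]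
    [AddCommMonoid M] [Module R M] [AddCommMonoid N] [Module R N]
    (f : M [⋀^ι]→ₗ[R] N) (v : ι → M) (S : Finset ι) (hcard : Fintype.card α < S.card)
    (E : α → M) (p : ι → α → R) (hv : ∀ k ∈ S, v k = ∑ j, p k j • E j) : f v = 0 := by
  classical
  obtain ⟨j₀⟩ := ‹Nonempty α›
  set T : ι → Finset α := fun k => if k ∈ S then Finset.univ else {j₀} with hT
  set y : ι → α → M := fun k j => if k ∈ S then p k j • E j else v k with hy
  have hx : v = fun k => ∑ j ∈ T k, y k j := by
    funext k; by_cases hk : k ∈ S <;> simp [hT, hy, hk, hv k]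
  have hsum : f v = ∑ g ∈ Fintype.piFinset T, f (fun k => y k (g k)) := by
    conv_lhs => rw [hx]
    have := f.toMultilinearMap.map_sum_finset y T
    simpa using this
  rw [hsum]
  refine Finset.sum_eq_zero fun g hg => ?_
  obtain ⟨k₁, hk₁, k₂, hk₂, hne, heq⟩ :=
    Finset.exists_ne_map_eq_of_card_lt_of_maps_to (t := (Finset.univ : Finset α))
      (s := S) (by simpa using hcard) (f := g) (fun k _ => Finset.mem_univ (g k))
  refine alt_zero_of_smul_smul f _ hne (a := p k₁ (g k₁)) (b := p k₂ (g k₂))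
    (w := E (g k₁)) (by simp [hy, hk₁]) ?_
  simp [hy, hk₂, heq]

/-- Degree bound for the determinant of the matrix `B`:
if every entry of `B` has total degree at most `2`, the columns of the
degree-1 part `B¹` are `ℂ`-linear combinations of `m = n − 1` degree-1
vectors `E₁,…,E_m`, and the columns of the degree-2 part `B²` are scalar
multiples of `e = ∑ k, ε_k·E_k`, then `deg det B ≤ n`. -/
theorem totalDegree_det_le (n : ℕ) (hn : 2 ≤ n) (L : ℕ) (hL : 1 ≤ L)
    (B : Matrix (Fin L) (Fin L) (MvPolynomial (Fin (n - 1)) ℂ))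
    (hdeg : ∀ i k : Fin L, (B i k).totalDegree ≤ 2)
    (E : Fin (n - 1) → (Fin L → MvPolynomial (Fin (n - 1)) ℂ))
    (hE : ∀ (j : Fin (n - 1)) (i : Fin L), (E j i).IsHomogeneous 1)
    (hB1 : ∀ k : Fin L, ∃ c : Fin (n - 1) → ℂ, ∀ i : Fin L,
      homogeneousComponent 1 (B i k) = ∑ j : Fin (n - 1), C (c j) * E j i)
    (hB2 : ∀ k : Fin L, ∃ c : ℂ, ∀ i : Fin L,
      homogeneousComponent 2 (B i k)
        = C c * ∑ j : Fin (n - 1), X j * E j i) :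
    B.det.totalDegree ≤ n := by
  classical
  choose c hc using hB1
  choose d hd using hB2
  have hm1 : 1 ≤ n - 1 := by omega
  haveI : Nonempty (Fin (n - 1)) := ⟨⟨0, by omega⟩⟩
  set f : (Fin L → MvPolynomial (Fin (n - 1)) ℂ)
      [⋀^Fin L]→ₗ[MvPolynomial (Fin (n - 1)) ℂ] MvPolynomial (Fin (n - 1)) ℂ :=
    Matrix.detRowAlternating with hf
  set g : Fin L → ℕ → (Fin L → MvPolynomial (Fin (n - 1)) ℂ) :=
    fun k t i => homogeneousComponent t (B i k) with hg
  have hrow : ∀ k : Fin L, (fun i => B i k) = ∑ t ∈ Finset.range 3, g k t := by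
    intro k; funext i
    rw [Finset.sum_apply]
    have hsub : Finset.range ((B i k).totalDegree + 1) ⊆ Finset.range 3 := by
      intro t ht
      simp only [Finset.mem_range] at ht ⊢
      have := hdeg i k; omega
    refine ((Finset.sum_subset hsub fun t ht hnt => ?_).symm.trans
      (sum_homogeneousComponent (B i k))).symm
    exact homogeneousComponent_eq_zero _ _ (by simp only [Finset.mem_range] at hnt; omega)
  have hdet : B.det = ∑ r ∈ Fintype.piFinset (fun _ : Fin L => Finset.range 3),
      f (fun k => g k (r k)) := by
    rw [← Matrix.det_transpose]
    have hBt : B.transpose = fun k => ∑ t ∈ Finset.range 3, g k t := by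
      funext k i
      exact congrFun (hrow k) i
    show f B.transpose = _
    rw [hBt]
    have := f.toMultilinearMap.map_sum_finset g (fun _ : Fin L => Finset.range 3)
    simpa using this
  rw [hdet]
  refine (totalDegree_finset_sum _ _).trans (Finset.sup_le fun r hr => ?_)
  have hrk : ∀ k, r k ≤ 2 := by
    intro k
    have := Fintype.mem_piFinset.mp hr k
    simp only [Finset.mem_range] at this; omega
  by_cases hsum : ∑ k, r k ≤ n
  · -- low-degree term: bound the degree of the determinant directly
    refine le_trans ?_ hsum
    have : f (fun k => g k (r k))
        = ∑ σ : Equiv.Perm (Fin L),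
            ((Equiv.Perm.sign σ : ℤ) : MvPolynomial (Fin (n - 1)) ℂ)
              * ∏ i, g (σ i) (r (σ i)) i := by
      exact Matrix.det_apply' (Matrix.of fun k i => g k (r k) i)
    rw [this]
    refine (totalDegree_finset_sum _ _).trans (Finset.sup_le fun σ _ => ?_)
    refine (totalDegree_mul _ _).trans ?_
    have hsgn : (((Equiv.Perm.sign σ : ℤ) : MvPolynomial (Fin (n - 1)) ℂ)).totalDegree = 0 := by
      rw [← map_intCast (C : ℂ →+* MvPolynomial (Fin (n - 1)) ℂ)]
      exact totalDegree_C _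
    rw [hsgn, zero_add]
    refine (totalDegree_finset_prod _ _).trans ?_
    calc ∑ i, (g (σ i) (r (σ i)) i).totalDegree
        ≤ ∑ i, r (σ i) := by
          refine Finset.sum_le_sum fun i _ => ?_
          exact (homogeneousComponent_isHomogeneous _ _).totalDegree_le
      _ = ∑ k, r k := Equiv.sum_comp σ r
  · -- high-degree term: it vanishes
    have hzero : f (fun k => g k (r k)) = 0 := by
      set S1 : Finset (Fin L) := Finset.univ.filter fun k => r k = 1 with hS1
      set S2 : Finset (Fin L) := Finset.univ.filter fun k => r k = 2 with hS2
      have hcards : ∑ k, r k = S1.card + 2 * S2.card := by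
        have e0 : ∑ k, r k
            = ∑ k : Fin L, ((if r k = 1 then 1 else 0) + (if r k = 2 then 2 else 0)) := by
          refine Finset.sum_congr rfl fun k _ => ?_
          have := hrk k
          split_ifs with h1 h2 <;> omega
        rw [e0, Finset.sum_add_distrib]
        congr 1
        · rw [← Finset.sum_filter]; simp [hS1]
        · rw [← Finset.sum_filter]; simp [hS2, mul_comm]
      have hbig : n + 1 ≤ S1.card + 2 * S2.card := by
        rw [← hcards]; omega
      by_cases hcase : n - 1 < S1.card + S2.card
      · -- more than m columns lie in the span of the E's
        have hdisj : Disjoint S1 S2 := by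
          rw [Finset.disjoint_filter]
          intro k _ h1 h2; omega
        have hcardU : (S1 ∪ S2).card = S1.card + S2.card :=
          Finset.card_union_of_disjoint hdisj
        refine alt_zero_of_card (α := Fin (n - 1)) f _ (S1 ∪ S2) ?_ E
          (fun k j => if r k = 1 then C (c k j) else C (d k) * X j) ?_
        · rw [hcardU, Fintype.card_fin]; exact hcase
        · intro k hk
          rcases Finset.mem_union.mp hk with hk1 | hk2
          · have hr1 : r k = 1 := (Finset.mem_filter.mp hk1).2
            funext i
            simp only [hg, hr1]
            rw [hc k i, Finset.sum_apply]
            refine Finset.sum_congr rfl fun j _ => ?_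
            simp
          · have hr2 : r k = 2 := (Finset.mem_filter.mp hk2).2
            funext i
            simp only [hg, hr2]
            rw [hd k i, Finset.sum_apply, Finset.mul_sum]
            refine Finset.sum_congr rfl fun j _ => ?_
            simp [mul_assoc]
      · -- at least two columns are multiples of e
        have h2le : 2 ≤ S2.card := by omega
        obtain ⟨k₁, hk₁, k₂, hk₂, hne⟩ := Finset.one_lt_card.mp (show 1 < S2.card by omega)
        have hr1 : r k₁ = 2 := (Finset.mem_filter.mp hk₁).2
        have hr2 : r k₂ = 2 := (Finset.mem_filter.mp hk₂).2
        refine alt_zero_of_smul_smul f _ hne (a := C (d k₁)) (b := C (d k₂))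
          (w := fun i => ∑ j, X j * E j i) ?_ ?_
        · funext i; simp only [hg, hr1]; rw [hd k₁ i]; simp
        · funext i; simp only [hg, hr2]; rw [hd k₂ i]; simp
    rw [hzero]
    simp
end

section
/- Let n ≥ 2, set m = n−1, let L ≥ 1, and let R = ℂ[ε₁,…,ε_m]. Let B be an L×L matrix over R all of whose entries have total degree at most 2, and write B = B⁰ + B¹ + B², where for j = 0, 1, 2 the matrix B^{j} consists of the degree-j homogeneous components of the entries of B. Suppose there exist column vectors E₁,…,E_m ∈ R^L whose entries are homogeneous polynomials of degree 1 and which are linearly independent over the fraction field ℂ(ε₁,…,ε_m), such that: (i) every column of B¹ is a ℂ-linear combination of E₁,…,E_m, and (ii) setting e := Σ_{k=1}^m ε_k·E_k, every column of B² is a complex scalar multiple of e. Let A be the L×m matrix over R whose k-th column is λ_k·E_k for some complex scalars λ_k (k = 1,…,m). Then every entry of the matrix adj(B)·A has total degree at most n. -/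
open MvPolynomial Matrix

section Aux

variable {σ : Type*}

private lemma sum_three_homogeneousComponent (p : MvPolynomial σ ℂ) (hp : p.totalDegree ≤ 2) :
    ∑ t : Fin 3, homogeneousComponent (t : ℕ) p = p := by
  have hsub : Finset.range (p.totalDegree + 1) ⊆ Finset.range 3 :=
    Finset.range_subset_range.mpr (by omega)
  have h := Finset.sum_subset hsub (fun x _ hx => homogeneousComponent_eq_zero x p
    (by simp only [Finset.mem_range] at hx ⊢; omega))
  rw [sum_homogeneousComponent] at h
  rw [Fin.sum_univ_eq_sum_range (fun t => homogeneousComponent t p) 3]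
  exact h.symm

private lemma isHomogeneous_det_of_rows {L : ℕ}
    (M : Matrix (Fin L) (Fin L) (MvPolynomial σ ℂ)) (d : Fin L → ℕ)
    (h : ∀ i j, (M i j).IsHomogeneous (d i)) :
    M.det.IsHomogeneous (∑ i, d i) := by
  rw [Matrix.det_apply, ← mem_homogeneousSubmodule]
  apply Submodule.sum_mem
  intro σ' _
  have hprod : (∏ i, M (σ' i) i).IsHomogeneous (∑ i, d (σ' i)) :=
    MvPolynomial.IsHomogeneous.prod _ _ _ (fun i _ => h (σ' i) i)
  rw [Equiv.sum_comp σ' d] at hprod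
  rcases Int.units_eq_one_or (Equiv.Perm.sign σ') with hs | hs <;> rw [hs] <;>
    rw [mem_homogeneousSubmodule]
  · simpa using hprod
  · simpa using hprod.neg

private lemma det_eq_zero_of_rows_in_span {K : Type*} [Field K] {L mm : ℕ}
    (M : Matrix (Fin L) (Fin L) K) (w : Fin mm → Fin L → K)
    (S : Finset (Fin L)) (hcard : mm < S.card)
    (hS : ∀ j ∈ S, M j ∈ Submodule.span K (Set.range w)) : M.det = 0 := by
  by_contra hdet
  have hli : LinearIndependent K (fun j => M j) :=
    Matrix.linearIndependent_rows_iff_isUnit.mpr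
      ((Matrix.isUnit_iff_isUnit_det M).mpr (isUnit_iff_ne_zero.mpr hdet))
  set W := Submodule.span K (Set.range w) with hW
  haveI : FiniteDimensional K W := FiniteDimensional.span_of_finite K (Set.finite_range w)
  have hli2 : LinearIndependent K (fun s : {x // x ∈ S} => M s.1) :=
    hli.comp _ Subtype.val_injective
  have hliW : LinearIndependent K (fun s : {x // x ∈ S} => (⟨M s.1, hS s.1 s.2⟩ : W)) :=
    LinearIndependent.of_comp W.subtype hli2
  have h1 := hliW.fintype_card_le_finrank
  have h2 : Module.finrank K W ≤ mm := by
    simpa [Set.finrank] using finrank_range_le_card (R := K) w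
  rw [Fintype.card_coe] at h1
  omega

end Aux

/-- Degree bound for `adj(B)·A`: with `B` as in the determinant bound, `E`
linearly independent over the fraction field, and `A` the matrix whose `k`-th
column is `λ_k·E_k`, every entry of `adj(B)·A` has total degree at most `n`. -/
theorem totalDegree_adjugate_mul_le (n : ℕ) (hn : 2 ≤ n) (L : ℕ) (hL : 1 ≤ L)
    (B : Matrix (Fin L) (Fin L) (MvPolynomial (Fin (n - 1)) ℂ))
    (hdeg : ∀ i k : Fin L, (B i k).totalDegree ≤ 2)
    (E : Fin (n - 1) → (Fin L → MvPolynomial (Fin (n - 1)) ℂ))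
    (hE : ∀ (j : Fin (n - 1)) (i : Fin L), (E j i).IsHomogeneous 1)
    (hEindep : LinearIndependent (FractionRing (MvPolynomial (Fin (n - 1)) ℂ))
      (fun j : Fin (n - 1) => fun i : Fin L =>
        algebraMap (MvPolynomial (Fin (n - 1)) ℂ)
          (FractionRing (MvPolynomial (Fin (n - 1)) ℂ)) (E j i)))
    (hB1 : ∀ k : Fin L, ∃ c : Fin (n - 1) → ℂ, ∀ i : Fin L,
      homogeneousComponent 1 (B i k) = ∑ j : Fin (n - 1), C (c j) * E j i)
    (hB2 : ∀ k : Fin L, ∃ c : ℂ, ∀ i : Fin L,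
      homogeneousComponent 2 (B i k)
        = C c * ∑ j : Fin (n - 1), X j * E j i)
    (lam : Fin (n - 1) → ℂ)
    (A : Matrix (Fin L) (Fin (n - 1)) (MvPolynomial (Fin (n - 1)) ℂ))
    (hA : ∀ (i : Fin L) (k : Fin (n - 1)), A i k = C (lam k) * E k i) :
    ∀ (i : Fin L) (k : Fin (n - 1)),
      ((B.adjugate * A) i k).totalDegree ≤ n := by
  intro i k
  classical
  -- Step 1: the entry is a Cramer determinant
  have h1 : (B.adjugate * A) i k = (B.updateCol i fun j => A j k).det := by
    rw [← Matrix.cramer_apply, Matrix.cramer_eq_adjugate_mulVec, Matrix.mul_apply]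
    rfl
  rw [h1, ← Matrix.det_transpose]
  set N : Matrix (Fin L) (Fin L) (MvPolynomial (Fin (n - 1)) ℂ) := (B.updateCol i fun j => A j k)ᵀ with hNdef
  have hNapp : ∀ j r, N j r = if j = i then C (lam k) * E k r else B r j := by
    intro j r
    rw [hNdef, Matrix.transpose_apply, Matrix.updateCol_apply]
    split <;> simp [hA]
  have hNdeg : ∀ j r, (N j r).totalDegree ≤ 2 := by
    intro j r
    rw [hNapp]
    split
    · exact le_trans (((hE k r).C_mul (lam k)).totalDegree_le) one_le_two
    · exact hdeg r j
  -- Step 2: expand by multilinearity over homogeneous components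
  have hNsum : N = fun j => ∑ t : Fin 3, (fun r => homogeneousComponent (t : ℕ) (N j r)) := by
    funext j r
    rw [Finset.sum_apply]
    exact (sum_three_homogeneousComponent _ (hNdeg j r)).symm
  have hexp : N.det = ∑ f : Fin L → Fin 3,
      (Matrix.of fun j r => homogeneousComponent ((f j : ℕ)) (N j r)).det := by
    conv_lhs => rw [hNsum]
    exact Matrix.detRowAlternating.toMultilinearMap.map_sum
      (g := fun (j : Fin L) (t : Fin 3) => fun r => homogeneousComponent (t : ℕ) (N j r))
  rw [hexp]
  apply totalDegree_finsetSum_le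
  intro f _
  set Mf : Matrix (Fin L) (Fin L) (MvPolynomial (Fin (n - 1)) ℂ) :=
    Matrix.of fun j r => homogeneousComponent ((f j : ℕ)) (N j r) with hMf
  have hhom : ∀ j r, (Mf j r).IsHomogeneous (f j) := fun j r =>
    homogeneousComponent_isHomogeneous _ _
  have hdethom := isHomogeneous_det_of_rows Mf (fun j => (f j : ℕ)) hhom
  by_cases hdn : (∑ j, ((f j : ℕ))) ≤ n
  · exact hdethom.totalDegree_le.trans hdn
  push_neg at hdn
  suffices hz : Mf.det = 0 by
    rw [hz, totalDegree_zero]; exact Nat.zero_le n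
  -- the degree-exceeding terms vanish
  have hNi : ∀ r, N i r = C (lam k) * E k r := fun r => by rw [hNapp, if_pos rfl]
  by_cases hfi : (f i : ℕ) = 1
  swap
  · -- row i is zero
    apply Matrix.det_eq_zero_of_row_eq_zero i
    intro r
    show homogeneousComponent ((f i : ℕ)) (N i r) = 0
    rw [hNi r,
      homogeneousComponent_of_mem ((mem_homogeneousSubmodule _ _).mpr
        ((hE k r).C_mul (lam k))), if_neg hfi]
  · set S2 := Finset.univ.filter fun j : Fin L => j ≠ i ∧ (f j : ℕ) = 2 with hS2
    set S1 := Finset.univ.filter fun j : Fin L => j ≠ i ∧ (f j : ℕ) = 1 with hS1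
    have hd_le : ∑ j, ((f j : ℕ)) ≤ 1 + (2 * S2.card + S1.card) := by
      rw [← Finset.add_sum_erase _ _ (Finset.mem_univ i), hfi]
      have hb : ∀ j ∈ Finset.univ.erase i,
          (f j : ℕ) ≤ (if j ∈ S2 then 2 else 0) + (if j ∈ S1 then 1 else 0) := by
        intro j hj
        have hji : j ≠ i := Finset.ne_of_mem_erase hj
        have h3 := (f j).isLt
        simp only [hS2, hS1, Finset.mem_filter, Finset.mem_univ, true_and]
        split_ifs <;> omega
      have hsum := Finset.sum_le_sum hb
      rw [Finset.sum_add_distrib] at hsum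
      have e2 : (∑ j ∈ Finset.univ.erase i, if j ∈ S2 then 2 else 0) = 2 * S2.card := by
        rw [Finset.sum_ite_mem, Finset.inter_eq_right.mpr, Finset.sum_const, smul_eq_mul,
          mul_comm]
        intro j hj
        simp only [hS2, Finset.mem_filter, Finset.mem_univ, true_and] at hj
        exact Finset.mem_erase.mpr ⟨hj.1, Finset.mem_univ j⟩
      have e1 : (∑ j ∈ Finset.univ.erase i, if j ∈ S1 then 1 else 0) = S1.card := by
        rw [Finset.sum_ite_mem, Finset.inter_eq_right.mpr, Finset.sum_const, smul_eq_mul,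
          mul_one]
        intro j hj
        simp only [hS1, Finset.mem_filter, Finset.mem_univ, true_and] at hj
        exact Finset.mem_erase.mpr ⟨hj.1, Finset.mem_univ j⟩
      rw [e2, e1] at hsum
      omega
    by_cases ha : 2 ≤ S2.card
    · -- two proportional rows coming from degree-2 components
      obtain ⟨j1, hj1, j2, hj2, hne⟩ := Finset.one_lt_card.mp ha
      have hj1' : j1 ≠ i ∧ (f j1 : ℕ) = 2 := by
        simpa [hS2] using hj1
      have hj2' : j2 ≠ i ∧ (f j2 : ℕ) = 2 := by
        simpa [hS2] using hj2
      obtain ⟨c1, hc1⟩ := hB2 j1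
      obtain ⟨c2, hc2⟩ := hB2 j2
      have hrow1 : ∀ r, Mf j1 r = C c1 * ∑ t, X t * E t r := by
        intro r
        show homogeneousComponent ((f j1 : ℕ)) (N j1 r) = _
        rw [hj1'.2, hNapp, if_neg hj1'.1, hc1 r]
      have hrow2 : ∀ r, Mf j2 r = C c2 * ∑ t, X t * E t r := by
        intro r
        show homogeneousComponent ((f j2 : ℕ)) (N j2 r) = _
        rw [hj2'.2, hNapp, if_neg hj2'.1, hc2 r]
      by_cases hc10 : c1 = 0
      · apply Matrix.det_eq_zero_of_row_eq_zero j1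
        intro r
        rw [hrow1 r, hc10, map_zero, zero_mul]
      · have hsmul : Mf j2 = (C (c2 * c1⁻¹) : MvPolynomial (Fin (n - 1)) ℂ) • Mf j1 := by
          funext r
          rw [Pi.smul_apply, smul_eq_mul, hrow1 r, hrow2 r, ← mul_assoc, ← C_mul]
          congr 2
          field_simp
        calc Mf.det = (Mf.updateRow j2 (Mf j2)).det := by rw [Matrix.updateRow_eq_self]
          _ = (Mf.updateRow j2 ((C (c2 * c1⁻¹) : MvPolynomial (Fin (n - 1)) ℂ) • Mf j1)).det := by rw [← hsmul]
          _ = C (c2 * c1⁻¹) * (Mf.updateRow j2 (Mf j1)).det :=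
              Matrix.det_updateRow_smul Mf j2 _ _
          _ = 0 := by rw [Matrix.det_updateRow_eq_zero hne, mul_zero]
    · -- too many rows in the span of the E's
      push_neg at ha
      set K := FractionRing (MvPolynomial (Fin (n - 1)) ℂ)
      set φ := algebraMap (MvPolynomial (Fin (n - 1)) ℂ) K with hφ
      have hinj : Function.Injective φ := IsFractionRing.injective (MvPolynomial (Fin (n - 1)) ℂ) K
      suffices hmz : (Mf.map φ).det = 0 by
        apply hinj
        rw [map_zero, RingHom.map_det, RingHom.mapMatrix_apply]
        exact hmz
      set S : Finset (Fin L) := insert i (S2 ∪ S1) with hS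
      have hiS : i ∉ S2 ∪ S1 := by
        intro h
        rcases Finset.mem_union.mp h with h | h <;>
          simp [hS2, hS1] at h
      have hdisj : Disjoint S2 S1 := by
        rw [Finset.disjoint_left]
        intro j hj hj'
        simp only [hS2, Finset.mem_filter, Finset.mem_univ, true_and] at hj
        simp only [hS1, Finset.mem_filter, Finset.mem_univ, true_and] at hj'
        omega
      have hcardS : n - 1 < S.card := by
        rw [hS, Finset.card_insert_of_notMem hiS, Finset.card_union_of_disjoint hdisj]
        omega
      apply det_eq_zero_of_rows_in_span _ (fun t r => φ (E t r)) S hcardS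
      intro j hj
      have hrowj : (Mf.map φ) j = fun r => φ (Mf j r) := rfl
      rcases Finset.mem_insert.mp hj with hj | hj
      · -- j = i
        subst hj
        have : (Mf.map φ) j = φ (C (lam k)) • (fun r => φ (E k r)) := by
          funext r
          rw [hrowj]
          show φ (Mf j r) = φ (C (lam k)) * φ (E k r)
          have : Mf j r = C (lam k) * E k r := by
            show homogeneousComponent ((f j : ℕ)) (N j r) = _
            rw [hNi r,
              homogeneousComponent_of_mem ((mem_homogeneousSubmodule _ _).mpr
                ((hE k r).C_mul (lam k))), if_pos hfi]
          rw [this, _root_.map_mul]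
        rw [this]
        exact Submodule.smul_mem _ _ (Submodule.subset_span ⟨k, rfl⟩)
      rcases Finset.mem_union.mp hj with hj | hj
      · -- j ∈ S2
        have hj' : j ≠ i ∧ (f j : ℕ) = 2 := by simpa [hS2] using hj
        obtain ⟨c, hc⟩ := hB2 j
        have : (Mf.map φ) j = ∑ t, φ (C c * X t) • (fun r => φ (E t r)) := by
          funext r
          rw [hrowj]
          show φ (Mf j r) = _
          have hr : Mf j r = ∑ t, (C c * X t) * E t r := by
            show homogeneousComponent ((f j : ℕ)) (N j r) = _
            rw [hj'.2, hNapp, if_neg hj'.1, hc r, Finset.mul_sum]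
            simp [mul_assoc]
          rw [hr, _root_.map_sum, Finset.sum_apply]
          simp [_root_.map_mul]
        rw [this]
        exact Submodule.sum_mem _ fun t _ =>
          Submodule.smul_mem _ _ (Submodule.subset_span ⟨t, rfl⟩)
      · -- j ∈ S1
        have hj' : j ≠ i ∧ (f j : ℕ) = 1 := by simpa [hS1] using hj
        obtain ⟨c, hc⟩ := hB1 j
        have : (Mf.map φ) j = ∑ t, φ (C (c t)) • (fun r => φ (E t r)) := by
          funext r
          rw [hrowj]
          show φ (Mf j r) = _
          have hr : Mf j r = ∑ t, C (c t) * E t r := by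
            show homogeneousComponent ((f j : ℕ)) (N j r) = _
            rw [hj'.2, hNapp, if_neg hj'.1, hc r]
          rw [hr, _root_.map_sum, Finset.sum_apply]
          simp [_root_.map_mul]
        rw [this]
        exact Submodule.sum_mem _ fun t _ =>
          Submodule.smul_mem _ _ (Submodule.subset_span ⟨t, rfl⟩)
end
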